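/- arXiv:2309.09370 — 3 statements merged into one kernel-verified Lean document; each statement's English description precedes it below -/
import Mathlib

section
/- Let C be a linear subspace of F_2^M all of whose nonzero elements have even Hamming weight at least 2N+2, with 2N+2 ≤ M. Then the dimension of C satisfies dim C ≤ M - 1 - log₂(∑_{j=0}^{⌊N/2⌋} C(M, 2j)), where C(M,k) denotes binomial coefficients; equivalently, 2^(dim C) · ∑_{j=0}^{⌊N/2⌋} C(M, 2j) ≤ 2^(M-1). -/
/-!
Translate the ball `B` of even-weight vectors of weight at most `2⌊N/2⌋` by every codeword.
Distinct codewords are at distance at least `2N + 2 > 2 · 2⌊N/2⌋`, so the translates are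
pairwise disjoint, and since codewords have even weight they all lie in the even-weight
subspace, which has `2^(M-1)` elements. Hence `|C| · |B| ≤ 2^(M-1)`, and
`|B| = ∑_{j ≤ ⌊N/2⌋} C(M, 2j)`.
-/

open Finset
open scoped Pointwise

theorem ZMod.eq_one_of_ne_zero {x : ZMod 2} (hx : x ≠ 0) : x = 1 := by
  revert x
  decide

section Hamming

variable {ι : Type*} [Fintype ι]

theorem natCast_hammingNorm_eq_sum (v : ι → ZMod 2) : (hammingNorm v : ZMod 2) = ∑ i, v i := by
  classical
  calc (hammingNorm v : ZMod 2) = ∑ i, if v i ≠ 0 then 1 else 0 := by rw [sum_boole]; rfl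
    _ = ∑ i, v i := sum_congr rfl fun i _ => by
      split_ifs with h
      exacts [(ZMod.eq_one_of_ne_zero h).symm, (not_not.1 h).symm]

theorem even_hammingNorm_iff_sum_eq_zero (v : ι → ZMod 2) :
    Even (hammingNorm v) ↔ ∑ i, v i = 0 := by
  rw [← natCast_hammingNorm_eq_sum, ZMod.natCast_eq_zero_iff_even]

theorem Even.hammingNorm_add {v w : ι → ZMod 2} (hv : Even (hammingNorm v))
    (hw : Even (hammingNorm w)) : Even (hammingNorm (v + w)) := by
  rw [even_hammingNorm_iff_sum_eq_zero] at *
  simp only [Pi.add_apply, sum_add_distrib, hv, hw, add_zero]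

theorem card_filter_hammingNorm_eq [DecidableEq ι] (k : ℕ) :
    #{v : ι → ZMod 2 | hammingNorm v = k} = (Fintype.card ι).choose k := by
  rw [← card_univ, ← card_powersetCard]
  refine card_nbij' (fun v => ({i | v i ≠ 0} : Finset ι)) (fun s i => if i ∈ s then 1 else 0)
    ?_ ?_ ?_ ?_
  · intro v hv
    simp_all [hammingNorm]
  · intro s hs
    simp_all [hammingNorm]
  · intro v _
    funext i
    by_cases h : v i = 0
    · simp [h]
    · simpa [h] using (ZMod.eq_one_of_ne_zero h).symm
  · intro s _
    ext i
    simp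

theorem card_filter_even_hammingNorm_le [DecidableEq ι] (r : ℕ) :
    #{v : ι → ZMod 2 | Even (hammingNorm v) ∧ hammingNorm v ≤ 2 * r} =
      ∑ j ∈ range (r + 1), (Fintype.card ι).choose (2 * j) := by
  rw [card_eq_sum_card_fiberwise (f := fun v => hammingNorm v / 2) (t := range (r + 1))]
  · refine sum_congr rfl fun j hj => ?_
    rw [← card_filter_hammingNorm_eq, filter_filter]
    congr 1
    refine filter_congr fun v _ => ?_
    rw [Nat.even_iff]
    have := mem_range.1 hj
    omega
  · intro v hv
    rw [mem_coe, mem_filter] at hv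
    simp only [mem_coe, mem_range]
    omega

end Hamming

theorem card_filter_sum_eq_zero {G : Type*} [AddCommGroup G] [Fintype G] [DecidableEq G] (m : ℕ) :
    #{v : Fin (m + 1) → G | ∑ i, v i = 0} = Fintype.card G ^ m := by
  calc _ = #(univ : Finset (Fin m → G)) := ?_
    _ = Fintype.card G ^ m := by simp
  refine card_nbij' Fin.tail (fun w => Fin.cons (-∑ i, w i) w) ?_ ?_ ?_ ?_
  · intro v _
    exact mem_coe.2 (mem_univ _)
  · intro w _
    simp [Fin.sum_univ_succ]
  · intro v hv
    rw [mem_coe, mem_filter, Fin.sum_univ_succ, ← eq_neg_iff_add_eq_zero] at hv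
    show Fin.cons (-∑ i : Fin m, v i.succ) (Fin.tail v) = v
    rw [← hv.2, Fin.cons_self_tail]
  · intro w _
    exact Fin.tail_cons _ _

theorem card_filter_even_hammingNorm (M : ℕ) :
    #{v : Fin M → ZMod 2 | Even (hammingNorm v)} = 2 ^ (M - 1) := by
  cases M with
  | zero => rfl -- the empty vector is even, and `0 - 1 = 0` in `ℕ`
  | succ m =>
    simp_rw [even_hammingNorm_iff_sum_eq_zero]
    exact card_filter_sum_eq_zero m

section Packing

variable {ι : Type*} [Fintype ι] {β : ι → Type*} [∀ i, AddCommGroup (β i)]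
  [∀ i, DecidableEq (β i)] {r : ℕ}

theorem injOn_add_of_two_mul_lt_hammingDist {C E : Set (∀ i, β i)}
    (hC : ∀ x ∈ C, ∀ y ∈ C, x ≠ y → 2 * r < hammingDist x y) (hE : ∀ e ∈ E, hammingNorm e ≤ r) :
    (C ×ˢ E).InjOn fun p => p.1 + p.2 := by
  rintro ⟨c₁, e₁⟩ ⟨hc₁ : c₁ ∈ C, he₁ : e₁ ∈ E⟩ ⟨c₂, e₂⟩ ⟨hc₂ : c₂ ∈ C, he₂ : e₂ ∈ E⟩ h
  dsimp only at h
  obtain rfl : c₁ = c₂ := by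
    by_contra hne
    have hdist : hammingDist c₁ c₂ ≤ hammingNorm e₂ + hammingNorm e₁ :=
      calc hammingDist c₁ c₂ = hammingDist e₂ e₁ := by
            rw [hammingDist_eq_hammingNorm, hammingDist_eq_hammingNorm,
              neg_add_eq_sub, neg_add_eq_sub,
              sub_eq_sub_iff_add_eq_add.2 (h.symm.trans (add_comm _ _))]
        _ ≤ hammingDist e₂ 0 + hammingDist 0 e₁ := hammingDist_triangle _ _ _
        _ = hammingNorm e₂ + hammingNorm e₁ := by
            rw [hammingDist_zero_right, hammingDist_zero_left]
    have := hC _ hc₁ _ hc₂ hne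
    have := hE _ he₁
    have := hE _ he₂
    omega
  rw [add_left_cancel h]

theorem card_mul_card_le_of_two_mul_lt_hammingDist {C B E : Finset (∀ i, β i)}
    (hC : ∀ x ∈ C, ∀ y ∈ C, x ≠ y → 2 * r < hammingDist x y) (hB : ∀ e ∈ B, hammingNorm e ≤ r)
    (hE : C + B ⊆ E) : #C * #B ≤ #E :=
  (card_add_iff.2 (injOn_add_of_two_mul_lt_hammingDist hC hB)).symm.trans_le (card_le_card hE)

end Packing

theorem stmt3_general (M N : ℕ)
    (C : Submodule (ZMod 2) (Fin M → ZMod 2))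
    (hC : ∀ v ∈ C, v ≠ 0 → Even (hammingNorm v) ∧ 2 * N + 2 ≤ hammingNorm v) :
    2 ^ (Module.finrank (ZMod 2) C) *
        (∑ j ∈ Finset.range (N / 2 + 1), M.choose (2 * j)) ≤ 2 ^ (M - 1) := by
  classical
  set CF : Finset (Fin M → ZMod 2) := (C : Set (Fin M → ZMod 2)).toFinset
  set B : Finset (Fin M → ZMod 2) := {v | Even (hammingNorm v) ∧ hammingNorm v ≤ 2 * (N / 2)}
  set E : Finset (Fin M → ZMod 2) := {v | Even (hammingNorm v)}
  have hC_dist : ∀ x ∈ CF, ∀ y ∈ CF, x ≠ y → 2 * (2 * (N / 2)) < hammingDist x y := by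
    intro x hx y hy hxy
    have := (hC _ (sub_mem (Set.mem_toFinset.1 hy) (Set.mem_toFinset.1 hx))
      (sub_ne_zero.2 hxy.symm)).2
    rw [hammingDist_eq_hammingNorm, neg_add_eq_sub]
    omega
  have hCB_even : CF + B ⊆ E := by
    intro v hv
    obtain ⟨c, hc, e, he, rfl⟩ := mem_add.1 hv
    have hc_even : Even (hammingNorm c) := by
      rcases eq_or_ne c 0 with rfl | hc_ne
      · simp
      · exact (hC c (Set.mem_toFinset.1 hc) hc_ne).1
    exact mem_filter.2 ⟨mem_univ _, hc_even.hammingNorm_add (mem_filter.1 he).2.1⟩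
  calc 2 ^ (Module.finrank (ZMod 2) C) * (∑ j ∈ range (N / 2 + 1), M.choose (2 * j))
      = #CF * #B := by
        rw [card_filter_even_hammingNorm_le, Fintype.card_fin, Set.toFinset_card,
          Module.card_eq_pow_finrank (K := ZMod 2), ZMod.card]
        rfl
    _ ≤ #E := card_mul_card_le_of_two_mul_lt_hammingDist hC_dist
        (fun e he => (mem_filter.1 he).2.2) hCB_even
    _ = 2 ^ (M - 1) := card_filter_even_hammingNorm M

/-- Hamming bound for even-weight codes: if every nonzero element of a linear
subspace `C` of `F_2^M` has even Hamming weight at least `2N+2` (with `2N+2 ≤ M`), then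
`2^(dim C) · ∑_{j=0}^{⌊N/2⌋} C(M, 2j) ≤ 2^(M-1)`. -/
theorem stmt3 (M N : ℕ) (hNM : 2 * N + 2 ≤ M)
    (C : Submodule (ZMod 2) (Fin M → ZMod 2))
    (hC : ∀ v ∈ C, v ≠ 0 → Even (hammingNorm v) ∧ 2 * N + 2 ≤ hammingNorm v) :
    2 ^ (Module.finrank (ZMod 2) C) *
        (∑ j ∈ Finset.range (N / 2 + 1), M.choose (2 * j)) ≤ 2 ^ (M - 1) :=
  stmt3_general M N C hC
end

section
/- For M ≥ 2N and N ≥ 1, there exists a linear map G : F_2^M → F_2^Q with Q ≤ ⌈2N·log₂ M⌉ that is injective on the set of vectors of Hamming weight exactly N. -/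
/-!
A linear map `G` is injective on the vectors of weight `N` as soon as no nonzero vector of
weight `≤ 2N` lies in its kernel, because `b - b'` has weight `≤ 2N`. Take `G = A *ᵥ ·` with
`A` a `Q × M` matrix over `𝔽₂`: a fixed `v ≠ 0` is killed by exactly a `1 / 2 ^ Q` fraction of the
matrices, so by the union bound some `A` kills none of a set `B` of nonzero vectors once
`#B < 2 ^ Q`. Over `𝔽₂` a vector is determined by its support, and every nonempty set of size
`≤ 2N` is the image of one of the `M ^ (2N)` maps `Fin (2N) → Fin M`; since two distinct maps
have the same image, there are fewer than `M ^ (2N)` such vectors, and `2 ^ Q ≥ M ^ (2N)` for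
`Q = ⌈log₂ M ^ (2N)⌉`.
-/

open Finset

namespace Matrix

variable {K ι κ : Type*} [Field K] [Fintype ι]

theorem mulVec_left_surjective {v : ι → K} (hv : v ≠ 0) :
    Function.Surjective fun A : Matrix κ ι K => A *ᵥ v := by
  classical
  obtain ⟨j, hj⟩ : ∃ j, v j ≠ 0 := Function.ne_iff.mp hv
  intro y
  refine ⟨of fun k => Pi.single j (y k / v j), funext fun k => ?_⟩
  simp [mulVec, single_dotProduct, div_mul_cancel₀ _ hj]

variable [Fintype κ] [Fintype K] [DecidableEq K] [DecidableEq ι] [DecidableEq κ]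

theorem card_filter_mulVec_eq_zero_mul {v : ι → K} (hv : v ≠ 0) :
    #{A : Matrix κ ι K | A *ᵥ v = 0} * Fintype.card K ^ Fintype.card κ =
      Fintype.card (Matrix κ ι K) := by
  let f := mulVec.addMonoidHomLeft (m := κ) v
  have hker : #{A : Matrix κ ι K | A *ᵥ v = 0} = Nat.card f.ker := by
    rw [← Fintype.card_subtype, ← Nat.card_eq_fintype_card]
    exact Nat.card_congr (Equiv.subtypeEquivRight fun _ => Iff.rfl)
  rw [hker, ← Fintype.card_fun, ← Nat.card_eq_fintype_card, ← Nat.card_eq_fintype_card,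
    ← AddSubgroup.card_top (G := κ → K),
    ← f.range_eq_top_of_surjective (mulVec_left_surjective hv), ← AddSubgroup.index_ker,
    AddSubgroup.card_mul_index]

theorem exists_forall_mulVec_ne_zero {B : Finset (ι → K)} (hB0 : 0 ∉ B)
    (hB : #B < Fintype.card K ^ Fintype.card κ) :
    ∃ A : Matrix κ ι K, ∀ v ∈ B, A *ᵥ v ≠ 0 := by
  by_contra! h
  have hcover : (univ : Finset (Matrix κ ι K)) ⊆ B.biUnion fun v => {A | A *ᵥ v = 0} := by
    intro A _
    obtain ⟨v, hv, hAv⟩ := h A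
    exact mem_biUnion.mpr ⟨v, hv, mem_filter.mpr ⟨mem_univ _, hAv⟩⟩
  have hcount := (card_le_card hcover).trans card_biUnion_le
  have hdouble : Fintype.card (Matrix κ ι K) * Fintype.card K ^ Fintype.card κ ≤
      #B * Fintype.card (Matrix κ ι K) := by
    rw [card_univ] at hcount
    calc _ ≤ (∑ v ∈ B, #{A : Matrix κ ι K | A *ᵥ v = 0}) * Fintype.card K ^ Fintype.card κ :=
          Nat.mul_le_mul_right _ hcount
      _ = #B * Fintype.card (Matrix κ ι K) := by
          rw [sum_mul, sum_congr rfl fun v hv => card_filter_mulVec_eq_zero_mul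
            (ne_of_mem_of_not_mem hv hB0), sum_const, smul_eq_mul]
  have hpos : 0 < Fintype.card (Matrix κ ι K) := Fintype.card_pos
  nlinarith

end Matrix

namespace Finset

variable {α β : Type*} [Fintype α] [DecidableEq β]

theorem exists_image_univ_eq {S : Finset β} (hS : S.Nonempty)
    (hcard : #S ≤ Fintype.card α) : ∃ f : α → β, univ.image f = S := by
  obtain ⟨e⟩ := Function.Embedding.nonempty_of_card_le (α := S) (β := α) (by simpa using hcard)
  have : Nonempty S := hS.coe_sort
  refine ⟨fun a => ((Function.invFun e a : S) : β), ext fun b => ⟨fun hb => ?_, fun hb => ?_⟩⟩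
  · obtain ⟨a, -, rfl⟩ := mem_image.mp hb
    exact (Function.invFun e a).prop
  · obtain ⟨a, ha⟩ := Function.invFun_surjective e.injective ⟨b, hb⟩
    exact mem_image.mpr ⟨a, mem_univ _, congrArg Subtype.val ha⟩

theorem exists_ne_image_univ_eq [Nontrivial α] [Nontrivial β] :
    ∃ f g : α → β, f ≠ g ∧ univ.image f = univ.image g := by
  classical
  obtain ⟨a, a', ha⟩ := exists_pair_ne α
  obtain ⟨b, b', hb⟩ := exists_pair_ne β
  refine ⟨fun x => if x = a then b else b', fun x => if x = a then b' else b,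
    fun h => hb (by simpa using congrFun h a), ext fun c => ?_⟩
  simp only [mem_image, mem_univ, true_and]
  constructor <;> rintro ⟨x, rfl⟩ <;> by_cases hx : x = a
  · exact ⟨a', by simp [hx, ha.symm]⟩
  · exact ⟨a, by simp [hx]⟩
  · exact ⟨a', by simp [hx, ha.symm]⟩
  · exact ⟨a, by simp [hx]⟩

variable [Fintype β]

theorem card_filter_nonempty_card_le_lt [Nontrivial α] [Nontrivial β] :
    #{S : Finset β | S.Nonempty ∧ #S ≤ Fintype.card α} < Fintype.card β ^ Fintype.card α := by
  classical
  have hsub : ({S : Finset β | S.Nonempty ∧ #S ≤ Fintype.card α} : Finset _) ⊆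
      univ.image fun f : α → β => univ.image f := by
    intro S hS
    obtain ⟨-, hne, hcard⟩ := mem_filter.mp hS
    obtain ⟨f, hf⟩ := exists_image_univ_eq hne hcard
    exact mem_image.mpr ⟨f, mem_univ _, hf⟩
  have hnoninj : #(univ.image fun f : α → β => univ.image f) < #(univ : Finset (α → β)) := by
    refine card_image_le.lt_of_ne fun h => ?_
    obtain ⟨f, g, hfg, hfg'⟩ := exists_ne_image_univ_eq (α := α) (β := β)
    exact hfg (card_image_iff.mp h (mem_univ f) (mem_univ g) hfg')
  simpa using (card_le_card hsub).trans_lt hnoninj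

end Finset

theorem card_filter_ne_zero_hammingNorm_le_lt {ι : Type*} [Fintype ι] [DecidableEq ι]
    [Nontrivial ι] {K : ℕ} (hK : 2 ≤ K) :
    #{v : ι → ZMod 2 | v ≠ 0 ∧ hammingNorm v ≤ K} < Fintype.card ι ^ K := by
  have : Nontrivial (Fin K) := Fin.nontrivial_iff_two_le.mpr hK
  have hsupp_inj : Function.Injective fun v : ι → ZMod 2 => ({i | v i ≠ 0} : Finset ι) := by
    intro v w h
    funext i
    have hvw : v i ≠ 0 ↔ w i ≠ 0 := by simpa using congrArg (i ∈ ·) h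
    exact (by decide : ∀ a b : ZMod 2, (a ≠ 0 ↔ b ≠ 0) → a = b) _ _ hvw
  calc #{v : ι → ZMod 2 | v ≠ 0 ∧ hammingNorm v ≤ K}
      ≤ #{S : Finset ι | S.Nonempty ∧ #S ≤ Fintype.card (Fin K)} := by
        refine card_le_card_of_injOn (fun v => ({i | v i ≠ 0} : Finset ι)) (fun v hv => ?_)
          hsupp_inj.injOn
        obtain ⟨-, hv0, hvK⟩ := mem_filter.mp hv
        simpa [hammingNorm, filter_nonempty_iff] using ⟨Function.ne_iff.mp hv0, hvK⟩
    _ < Fintype.card ι ^ K := by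
        simpa using card_filter_nonempty_card_le_lt (α := Fin K) (β := ι)

theorem hammingNorm_sub_le {ι : Type*} [Fintype ι] {β : ι → Type*} [∀ i, AddGroup (β i)]
    [∀ i, DecidableEq (β i)] (x y : ∀ i, β i) :
    hammingNorm (x - y) ≤ hammingNorm x + hammingNorm y := by
  calc hammingNorm (x - y) = hammingDist x y := by
        simp_rw [hammingNorm, hammingDist, Pi.sub_apply, sub_ne_zero]
    _ ≤ hammingDist x 0 + hammingDist 0 y := hammingDist_triangle x 0 y
    _ = hammingNorm x + hammingNorm y := by rw [hammingDist_zero_right, hammingDist_zero_left]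

/-- For `M ≥ 2N` and `N ≥ 1`, there exists a linear map `G : F_2^M → F_2^Q`
with `Q ≤ ⌈2N·log₂ M⌉ = ⌈log₂ (M^(2N))⌉` that is injective on the set of vectors of
Hamming weight exactly `N`. -/
theorem stmt6 (M N : ℕ) (hN : 1 ≤ N) (hM : 2 * N ≤ M) :
    ∃ (Q : ℕ) (G : (Fin M → ZMod 2) →ₗ[ZMod 2] (Fin Q → ZMod 2)),
      Q ≤ Nat.clog 2 (M ^ (2 * N)) ∧
      ∀ b b' : Fin M → ZMod 2, hammingNorm b = N → hammingNorm b' = N →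
        G b = G b' → b = b' := by
  set Q := Nat.clog 2 (M ^ (2 * N))
  have : Nontrivial (Fin M) := Fin.nontrivial_iff_two_le.mpr (by omega)
  have hB : #{v : Fin M → ZMod 2 | v ≠ 0 ∧ hammingNorm v ≤ 2 * N} <
      Fintype.card (ZMod 2) ^ Fintype.card (Fin Q) := by
    simpa using (card_filter_ne_zero_hammingNorm_le_lt (ι := Fin M) (by omega)).trans_le
      (Nat.le_pow_clog one_lt_two _)
  obtain ⟨A, hA⟩ := Matrix.exists_forall_mulVec_ne_zero (by simp) hB
  refine ⟨Q, A.mulVecLin, le_rfl, fun b b' hb hb' hbb' => ?_⟩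
  by_contra hne
  refine hA (b - b') (mem_filter.mpr ⟨mem_univ _, sub_ne_zero.mpr hne, ?_⟩) ?_
  · exact (hammingNorm_sub_le b b').trans (by omega)
  · simpa [Matrix.mulVec_sub, sub_eq_zero] using hbb'
end

section
/- For a, b ∈ F_2^M with a ≠ 0, the operator X^a(P^b + P^(a⊕b)), when expanded in the Pauli basis, is a real linear combination of pairwise commuting Pauli strings. -/
/-- The X-string `X^a = ⊗_m X^(a[m])` acting on the computational basis of `M` qubits,
represented as a matrix indexed by `F_2^M`: it sends `|s⟩` to `|a ⊕ s⟩`. -/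
def Xstr {M : ℕ} (a : Fin M → ZMod 2) :
    Matrix (Fin M → ZMod 2) (Fin M → ZMod 2) ℂ :=
  Matrix.of fun r s => if r = a + s then 1 else 0

/-- The P-string `P^b = ⊗_m |b[m]⟩⟨b[m]|`, the rank-one projector onto `|b⟩`. -/
def Pstr {M : ℕ} (b : Fin M → ZMod 2) :
    Matrix (Fin M → ZMod 2) (Fin M → ZMod 2) ℂ :=
  Matrix.of fun r s => if r = b ∧ s = b then 1 else 0

/-- The Z-string `Z^c = ⊗_m Z^(c[m])`, diagonal with entries `(-1)^(c·r)`. -/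
def Zstr {M : ℕ} (c : Fin M → ZMod 2) :
    Matrix (Fin M → ZMod 2) (Fin M → ZMod 2) ℂ :=
  Matrix.of fun r s => if r = s then (-1 : ℂ) ^ ((dotProduct c r).val) else 0

/-- The Hermitian Pauli string indexed by symplectic data `(x, z)`:
`i^(|x ∧ z|) X^x Z^z`, the tensor product of `I, X, Y, Z` on `M` qubits. -/
noncomputable def PauliStr {M : ℕ} (x z : Fin M → ZMod 2) :
    Matrix (Fin M → ZMod 2) (Fin M → ZMod 2) ℂ :=
  (Complex.I ^ (Finset.univ.filter fun m => x m = 1 ∧ z m = 1).card) • (Xstr x * Zstr z)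

/-!
Expanding the projectors in Z-strings, `P^b = 2^(-M) ∑_c (-1)^(b·c) Z^c`, gives
`X^a (P^b + P^(a+b)) = 2^(-M) ∑_c (-1)^(b·c) (1 + (-1)^(a·c)) X^a Z^c`,
so only the strings `X^a Z^c` with `a·c = 0` survive. For those, `|a ∧ c| ≡ a·c` is even, so
`X^a Z^c` is a real multiple (a sign) of the Hermitian Pauli string `(a, c)`. Finally
`Z^c X^a = (-1)^(a·c) X^a Z^c`, so `X^x Z^z` and `X^x' Z^z'` commute as soon as
`x·z' = x'·z`; any two surviving strings share `x = a` and have `a·c = a·c' = 0`.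
-/

open Matrix Finset

lemma neg_one_pow_val_add {R : Type*} [Ring R] (x y : ZMod 2) :
    (-1 : R) ^ (x + y).val = (-1) ^ x.val * (-1) ^ y.val := by
  rw [← pow_add, ZMod.val_add, ← neg_one_pow_eq_pow_mod_two]

lemma neg_one_pow_val_eq_one_iff (x : ZMod 2) : (-1 : ℂ) ^ x.val = 1 ↔ x = 0 := by
  rw [← ZMod.val_eq_zero]
  have := x.val_lt
  interval_cases x.val <;> norm_num

section ParityChar

variable {ι : Type*} [Fintype ι]

def parityChar (e : ι → ZMod 2) : AddChar (ι → ZMod 2) ℂ where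
  toFun c := (-1) ^ (e ⬝ᵥ c).val
  map_zero_eq_one' := by simp
  map_add_eq_mul' c c' := by rw [dotProduct_add, neg_one_pow_val_add]

lemma parityChar_eq_zero_iff [DecidableEq ι] (e : ι → ZMod 2) :
    parityChar e = 0 ↔ e = 0 := by
  refine ⟨fun h => funext fun i => ?_, fun h => ?_⟩
  · have := DFunLike.congr_fun h (Pi.single i 1)
    rwa [AddChar.zero_apply, parityChar, AddChar.coe_mk, dotProduct_single, mul_one,
      neg_one_pow_val_eq_one_iff] at this
  · ext c
    simp [parityChar, h]

lemma sum_neg_one_pow_dotProduct [DecidableEq ι] (e : ι → ZMod 2) :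
    ∑ c : ι → ZMod 2, (-1 : ℂ) ^ (e ⬝ᵥ c).val = if e = 0 then 2 ^ Fintype.card ι else 0 := by
  convert AddChar.sum_eq_ite (parityChar e) using 1
  · rfl
  · simp [parityChar_eq_zero_iff]

end ParityChar

namespace CharTwo

variable {ι R : Type*} [Ring R] [CharP R 2]

lemma pi_add_cancel_left (a b : ι → R) : a + (a + b) = b :=
  funext fun i => CharTwo.add_cancel_left (a i) (b i)

lemma pi_eq_add_iff_add_eq {a r s : ι → R} : r = a + s ↔ a + r = s :=
  ⟨by rintro rfl; exact pi_add_cancel_left a s, by rintro rfl; exact (pi_add_cancel_left a r).symm⟩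

lemma pi_add_eq_zero {a b : ι → R} : a + b = 0 ↔ b = a := by
  rw [← pi_eq_add_iff_add_eq, add_zero]

end CharTwo

section PauliStrings

open CharTwo

variable {M : ℕ}

lemma Xstr_mul_apply (a : Fin M → ZMod 2) (A : Matrix (Fin M → ZMod 2) (Fin M → ZMod 2) ℂ)
    (r s : Fin M → ZMod 2) : (Xstr a * A) r s = A (a + r) s := by
  simp [Xstr, mul_apply, pi_eq_add_iff_add_eq]

lemma Xstr_mul_Xstr (a a' : Fin M → ZMod 2) : Xstr a * Xstr a' = Xstr (a + a') := by
  ext r s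
  rw [Xstr_mul_apply]
  simp only [Xstr, of_apply, pi_eq_add_iff_add_eq, add_assoc, add_left_comm]

lemma Zstr_eq_diagonal (c : Fin M → ZMod 2) :
    Zstr c = diagonal fun r => (-1 : ℂ) ^ (c ⬝ᵥ r).val :=
  rfl

lemma Zstr_commute (c c' : Fin M → ZMod 2) : Commute (Zstr c) (Zstr c') := by
  rw [Zstr_eq_diagonal, Zstr_eq_diagonal]
  exact commute_diagonal _ _

lemma Zstr_mul_Xstr (c a : Fin M → ZMod 2) :
    Zstr c * Xstr a = (-1 : ℂ) ^ (a ⬝ᵥ c).val • (Xstr a * Zstr c) := by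
  ext r s
  rw [Matrix.smul_apply, Xstr_mul_apply, Zstr_eq_diagonal, diagonal_mul]
  simp only [Xstr, diagonal, of_apply, pi_eq_add_iff_add_eq]
  by_cases h : a + r = s
  · rw [if_pos h, if_pos h, mul_one, smul_eq_mul, dotProduct_add, neg_one_pow_val_add,
      dotProduct_comm c a, ← mul_assoc, ← pow_add, Even.neg_one_pow ⟨_, rfl⟩, one_mul]
  · simp [h]

lemma Xstr_mul_Zstr_mul_Xstr_mul_Zstr (x z x' z' : Fin M → ZMod 2) :
    Xstr x * Zstr z * (Xstr x' * Zstr z') =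
      (-1 : ℂ) ^ (x' ⬝ᵥ z).val • (Xstr (x + x') * (Zstr z * Zstr z')) := by
  rw [← Xstr_mul_Xstr, mul_assoc, ← mul_assoc (Zstr z), Zstr_mul_Xstr, smul_mul_assoc,
    mul_smul_comm, mul_assoc, mul_assoc]

lemma Xstr_mul_Zstr_commute {x z x' z' : Fin M → ZMod 2} (h : x ⬝ᵥ z' = x' ⬝ᵥ z) :
    Commute (Xstr x * Zstr z) (Xstr x' * Zstr z') := by
  rw [commute_iff_eq, Xstr_mul_Zstr_mul_Xstr_mul_Zstr, Xstr_mul_Zstr_mul_Xstr_mul_Zstr, h,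
    add_comm x, (Zstr_commute z z').eq]

lemma PauliStr_commute {x z x' z' : Fin M → ZMod 2} (h : x ⬝ᵥ z' = x' ⬝ᵥ z) :
    Commute (PauliStr x z) (PauliStr x' z') :=
  ((Xstr_mul_Zstr_commute h).smul_left _).smul_right _

def overlap (x z : Fin M → ZMod 2) : ℕ := #{m | x m = 1 ∧ z m = 1}

lemma PauliStr_eq (x z : Fin M → ZMod 2) :
    PauliStr x z = Complex.I ^ overlap x z • (Xstr x * Zstr z) :=
  rfl

lemma dotProduct_eq_overlap (x z : Fin M → ZMod 2) : x ⬝ᵥ z = overlap x z := by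
  have hmul : ∀ u v : ZMod 2, u * v = if u = 1 ∧ v = 1 then 1 else 0 := by decide
  simp only [dotProduct, hmul, sum_boole, overlap]

lemma Xstr_mul_Zstr_eq_smul_PauliStr {x z : Fin M → ZMod 2} (h : x ⬝ᵥ z = 0) :
    Xstr x * Zstr z = ((-1 : ℝ) ^ (overlap x z / 2) : ℂ) • PauliStr x z := by
  obtain ⟨k, hk⟩ : Even (overlap x z) := by
    rwa [← ZMod.natCast_eq_zero_iff_even, ← dotProduct_eq_overlap]
  rw [PauliStr_eq, smul_smul, hk, ← two_mul, pow_mul, Complex.I_sq,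
    Nat.mul_div_cancel_left _ two_pos]
  push_cast
  rw [← pow_add, Even.neg_one_pow ⟨k, rfl⟩, one_smul]

lemma Pstr_eq_sum_Zstr (b : Fin M → ZMod 2) :
    Pstr b = ((2 : ℂ) ^ M)⁻¹ • ∑ c, (-1 : ℂ) ^ (b ⬝ᵥ c).val • Zstr c := by
  ext r s
  simp only [Matrix.smul_apply, Matrix.sum_apply, Zstr, of_apply, smul_eq_mul, mul_ite, mul_zero]
  by_cases hrs : r = s
  · subst hrs
    simp only [if_true]
    simp_rw [dotProduct_comm _ r, ← neg_one_pow_val_add, ← add_dotProduct]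
    simp only [sum_neg_one_pow_dotProduct, Fintype.card_fin, pi_add_eq_zero, Pstr,
      of_apply, and_self]
    split_ifs <;> simp
  · have hb : ¬(r = b ∧ s = b) := fun h => hrs (h.1.trans h.2.symm)
    simp [Pstr, hrs, hb]

lemma Xstr_mul_Pstr_add_Pstr (a b : Fin M → ZMod 2) :
    Xstr a * (Pstr b + Pstr (a + b)) =
      ∑ c, (((2 : ℂ) ^ M)⁻¹ * ((-1) ^ (b ⬝ᵥ c).val + (-1) ^ ((a + b) ⬝ᵥ c).val)) •
        (Xstr a * Zstr c) := by
  rw [Pstr_eq_sum_Zstr, Pstr_eq_sum_Zstr, ← smul_add, ← sum_add_distrib, mul_smul_comm,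
    mul_sum, smul_sum]
  simp only [← add_smul, mul_smul_comm, smul_smul]

lemma neg_one_pow_val_add_neg_one_pow_val_add_eq_zero {x : ZMod 2} (hx : x ≠ 0) (y : ZMod 2) :
    (-1 : ℂ) ^ y.val + (-1) ^ (x + y).val = 0 := by
  obtain rfl : x = 1 := Fin.eq_one_of_ne_zero x hx
  rw [neg_one_pow_val_add, show (1 : ZMod 2).val = 1 from rfl]
  ring

end PauliStrings

theorem stmt11_general (M : ℕ) (a b : Fin M → ZMod 2) :
    ∃ (S : Finset ((Fin M → ZMod 2) × (Fin M → ZMod 2)))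
      (coef : (Fin M → ZMod 2) × (Fin M → ZMod 2) → ℝ),
      Xstr a * (Pstr b + Pstr (a + b)) = ∑ p ∈ S, (coef p : ℂ) • PauliStr p.1 p.2 ∧
      ∀ p ∈ S, ∀ q ∈ S, Commute (PauliStr p.1 p.2) (PauliStr q.1 q.2) := by
  refine ⟨{a} ×ˢ ({c | a ⬝ᵥ c = 0} : Finset _), fun p => (2 ^ M)⁻¹ *
    ((-1) ^ (b ⬝ᵥ p.2).val + (-1) ^ ((a + b) ⬝ᵥ p.2).val) * (-1) ^ (overlap a p.2 / 2), ?_, ?_⟩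
  · rw [Xstr_mul_Pstr_add_Pstr, sum_product, sum_singleton,
      ← sum_filter_of_ne (p := fun c => a ⬝ᵥ c = 0)]
    · refine sum_congr rfl fun c hc => ?_
      rw [Xstr_mul_Zstr_eq_smul_PauliStr (mem_filter.1 hc).2, smul_smul]
      push_cast
      rfl
    · intro c _ hc
      by_contra h
      rw [add_dotProduct, neg_one_pow_val_add_neg_one_pow_val_add_eq_zero h, mul_zero,
        zero_smul] at hc
      exact hc rfl
  · rintro ⟨x, c⟩ hp ⟨x', c'⟩ hq
    simp only [mem_product, mem_singleton, mem_filter_univ] at hp hq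
    obtain ⟨rfl, hc⟩ := hp
    obtain ⟨rfl, hc'⟩ := hq
    exact PauliStr_commute (hc'.trans hc.symm)

/-- For `a ≠ 0`, the operator `X^a(P^b + P^(a⊕b))`, expanded in the Pauli
basis, is a real linear combination of pairwise commuting Pauli strings. -/
theorem stmt11 (M : ℕ) (a b : Fin M → ZMod 2) (ha : a ≠ 0) :
    ∃ (S : Finset ((Fin M → ZMod 2) × (Fin M → ZMod 2)))
      (coef : (Fin M → ZMod 2) × (Fin M → ZMod 2) → ℝ),
      Xstr a * (Pstr b + Pstr (a + b)) = ∑ p ∈ S, (coef p : ℂ) • PauliStr p.1 p.2 ∧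
      ∀ p ∈ S, ∀ q ∈ S, Commute (PauliStr p.1 p.2) (PauliStr q.1 q.2) :=
  stmt11_general M a b
end
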